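/- arXiv:2502.07031 — 10 statements merged into one kernel-verified Lean document; each statement's English description precedes it below -/
import Mathlib

section
/- For Sylvester's sequence, any two distinct terms s_i and s_j are coprime. -/
theorem sylvester_coprime (s : ℕ → ℕ) (h0 : s 0 = 2)
    (hrec : ∀ k, s (k + 1) = s k ^ 2 - s k + 1) (i j : ℕ) (hij : i ≠ j) :
    Nat.Coprime (s i) (s j) := by
  have h2 : ∀ k, 2 ≤ s k := by
    intro k
    induction k with
    | zero => omega
    | succ n ih =>
      have hsq : s n ^ 2 = s n * s n := by ring
      have : 2 * s n ≤ s n * s n := Nat.mul_le_mul_right _ ih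
      rw [hrec]
      omega
  have hdvd : ∀ m k, k < m → s k ∣ s m - 1 := by
    intro m
    induction m with
    | zero => omega
    | succ n ih =>
      intro k hk
      have hsq : s n ^ 2 = s n * s n := by ring
      have hle : 2 * s n ≤ s n * s n := Nat.mul_le_mul_right _ (h2 n)
      have heq : s (n + 1) - 1 = s n * (s n - 1) := by
        rw [hrec]
        have : s n * (s n - 1) = s n * s n - s n := by
          rw [Nat.mul_sub]; ring_nf
        omega
      rw [heq]
      rcases Nat.lt_succ_iff_lt_or_eq.mp hk with h | h
      · exact Dvd.dvd.mul_left (ih k h) _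
      · exact h ▸ Dvd.dvd.mul_right dvd_rfl _
  have key : ∀ a b, a < b → Nat.Coprime (s a) (s b) := by
    intro a b hab
    have h1 : s a ∣ s b - 1 := hdvd b a hab
    have hgcd1 : Nat.gcd (s a) (s b) ∣ s b - 1 := dvd_trans (Nat.gcd_dvd_left _ _) h1
    have hgcd2 : Nat.gcd (s a) (s b) ∣ s b := Nat.gcd_dvd_right _ _
    have : Nat.gcd (s a) (s b) ∣ s b - (s b - 1) := Nat.dvd_sub hgcd2 hgcd1
    have h2b := h2 b
    have heq1 : s b - (s b - 1) = 1 := by omega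
    rw [heq1] at this
    exact Nat.eq_one_of_dvd_one this
  rcases lt_or_gt_of_ne hij with h | h
  · exact key i j h
  · exact (key j i h).symm
end

section
/- Let s be Sylvester's sequence and n ≥ 1. The n×n integer matrix T with T_{ii} = s_i - 1 (indices 0 ≤ i ≤ n-1) and T_{ij} = -1 for i ≠ j has determinant 1. -/
/-!
Over `ℚ` the matrix is `diagonal s - J` with `J` the all-ones matrix, a rank-one perturbation of
a diagonal matrix, so by the matrix determinant lemma its determinant is
`(∏ i, s i) * (1 - ∑ i, 1 / s i)`. Since `s m = s 0 * ⋯ * s (m - 1) + 1`, the reciprocals telescope: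
`∑ i < n, 1 / s i = 1 - 1 / ∏ i < n, s i`, and the determinant is `1`.
-/

open Matrix Finset

theorem det_diagonal_sub_all_ones {ι K : Type*} [Fintype ι] [DecidableEq ι] [Field K]
    (d : ι → K) (hd : ∀ i, d i ≠ 0) :
    (diagonal d - of fun _ _ => 1).det = (∏ i, d i) * (1 - ∑ i, (d i)⁻¹) := by
  have hfactor : diagonal d - of (fun _ _ => (1 : K)) =
      (1 + replicateCol Unit (fun _ => (-1 : K)) * replicateRow Unit (fun j => (d j)⁻¹)) *
        diagonal d := by
    rw [Matrix.add_mul, Matrix.one_mul]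
    ext i j
    rw [Matrix.sub_apply, Matrix.add_apply, mul_diagonal]
    by_cases h : i = j
    · subst h; simp [mul_apply, hd, sub_eq_add_neg]
    · simp [mul_apply, h, hd]
  rw [hfactor, det_mul, det_one_add_replicateCol_mul_replicateRow, det_diagonal]
  simp [dotProduct, sub_eq_add_neg, mul_comm]

theorem sylvester_eq_prod_range_add_one (s : ℕ → ℕ) (h0 : s 0 = 2)
    (hrec : ∀ k, s (k + 1) = s k ^ 2 - s k + 1) (m : ℕ) :
    s m = ∏ i ∈ range m, s i + 1 := by
  induction m with
  | zero => simp [h0]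
  | succ m ih =>
    rw [hrec, prod_range_succ, ih]
    generalize ∏ i ∈ range m, s i = P
    have hsq : (P + 1) ^ 2 = P * (P + 1) + (P + 1) := by ring
    omega

theorem sum_range_inv_eq_one_sub_inv_prod {K : Type*} [Field K] (a : ℕ → K)
    (ha : ∀ m, a m = ∏ i ∈ range m, a i + 1) (ha0 : ∀ m, a m ≠ 0) (m : ℕ) :
    ∑ i ∈ range m, (a i)⁻¹ = 1 - (∏ i ∈ range m, a i)⁻¹ := by
  induction m with
  | zero => simp
  | succ m ih =>
    have hP : ∏ i ∈ range m, a i ≠ 0 := prod_ne_zero_iff.2 fun i _ => ha0 i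
    have hm := ha0 m
    rw [sum_range_succ, prod_range_succ, ih, ha m] at *
    field_simp
    ring

theorem sylvester_matrix_det_one_general (s : ℕ → ℕ) (h0 : s 0 = 2)
    (hrec : ∀ k, s (k + 1) = s k ^ 2 - s k + 1) (n : ℕ) :
    (Matrix.of fun i j : Fin n =>
      if i = j then (s (i : ℕ) : ℤ) - 1 else -1).det = 1 := by
  have hs : ∀ m, (s m : ℚ) = ∏ i ∈ range m, (s i : ℚ) + 1 := fun m => by
    exact_mod_cast sylvester_eq_prod_range_add_one s h0 hrec m
  have hs0 : ∀ m, (s m : ℚ) ≠ 0 := fun m => by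
    rw [sylvester_eq_prod_range_add_one s h0 hrec m]; positivity
  set T := Matrix.of fun i j : Fin n => if i = j then (s (i : ℕ) : ℤ) - 1 else -1
  have hT : T.map (Int.cast : ℤ → ℚ) = diagonal (fun i : Fin n => (s i : ℚ)) - of fun _ _ => 1 := by
    ext i j
    by_cases h : i = j <;> simp [T, h]
  have hprod : ∏ i ∈ range n, (s i : ℚ) ≠ 0 := prod_ne_zero_iff.2 fun i _ => hs0 i
  suffices (T.det : ℚ) = 1 by
    exact_mod_cast this
  rw [Int.cast_det, hT, det_diagonal_sub_all_ones _ fun i : Fin n => hs0 i,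
    Fin.prod_univ_eq_prod_range (fun i => (s i : ℚ)) n,
    Fin.sum_univ_eq_sum_range (fun i => (s i : ℚ)⁻¹) n,
    sum_range_inv_eq_one_sub_inv_prod _ hs hs0, sub_sub_cancel, mul_inv_cancel₀ hprod]

theorem sylvester_matrix_det_one (s : ℕ → ℕ) (h0 : s 0 = 2)
    (hrec : ∀ k, s (k + 1) = s k ^ 2 - s k + 1) (n : ℕ) (hn : 1 ≤ n) :
    (Matrix.of fun i j : Fin n =>
      if i = j then (s (i : ℕ) : ℤ) - 1 else -1).det = 1 :=
  sylvester_matrix_det_one_general s h0 hrec n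
end

section
/- Let s be Sylvester's sequence, n ≥ 1, d = s_n - 1, and let T : ℝ^n → ℝ^n be the linear map sending e_i to the vector with s_i - 1 in position i and -1 elsewhere. Then T(w_2) = (-1, …, -1), where w_2 is the vector with i-th coordinate -d/s_i. -/
theorem T_w2_eq_neg_one (s : ℕ → ℕ) (h0 : s 0 = 2)
    (hrec : ∀ k, s (k + 1) = s k ^ 2 - s k + 1) (n : ℕ) (hn : 1 ≤ n) :
    ∀ i < n,
      -(((s n : ℚ) - 1) / (s i : ℚ)) * ((s i : ℚ) - 1) +
        ∑ j ∈ (Finset.range n).erase i, ((s n : ℚ) - 1) / (s j : ℚ) = -1 := by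
  have h2 : ∀ k, 2 ≤ s k := by
    intro k
    induction k with
    | zero => omega
    | succ k ih =>
      have : s k ^ 2 ≥ 2 * s k := by nlinarith
      rw [hrec k]; omega
  have hcast : ∀ k, ((s (k+1) : ℚ) - 1) = (s k : ℚ) * ((s k : ℚ) - 1) := by
    intro k
    have h := h2 k
    have : (s (k+1) : ℚ) = (s k : ℚ)^2 - (s k : ℚ) + 1 := by
      rw [hrec k]
      have hle : s k ≤ s k ^ 2 := by nlinarith
      push_cast [hle]
      ring
    rw [this]; ring
  have hne : ∀ k, (s k : ℚ) ≠ 0 := by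
    intro k
    have := h2 k
    positivity
  have hsum : ∀ m, ∑ j ∈ Finset.range m, (1 / (s j : ℚ)) = 1 - 1 / ((s m : ℚ) - 1) := by
    intro m
    induction m with
    | zero => simp [h0]; norm_num
    | succ m ih =>
      rw [Finset.sum_range_succ, ih, hcast m]
      have hm : ((s m : ℚ) - 1) ≠ 0 := by
        have := h2 m
        have : (2 : ℚ) ≤ (s m : ℚ) := by exact_mod_cast this
        linarith
      have key : 1 / ((s m : ℚ) - 1) - 1 / ((s m : ℚ) * ((s m : ℚ) - 1)) = 1 / (s m : ℚ) := by
        field_simp [hne m]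
      linarith
  intro i hi
  have hd : ((s n : ℚ) - 1) ≠ 0 := by
    have := h2 n
    have : (2 : ℚ) ≤ (s n : ℚ) := by exact_mod_cast this
    linarith
  have hsum2 : ∑ j ∈ Finset.range n, ((s n : ℚ) - 1) / (s j : ℚ) = (s n : ℚ) - 2 := by
    have : ∑ j ∈ Finset.range n, ((s n : ℚ) - 1) / (s j : ℚ)
        = ((s n : ℚ) - 1) * ∑ j ∈ Finset.range n, (1 / (s j : ℚ)) := by
      rw [Finset.mul_sum]
      apply Finset.sum_congr rfl
      intro j _
      ring
    rw [this, hsum n]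
    field_simp
    ring
  have herase : ∑ j ∈ (Finset.range n).erase i, ((s n : ℚ) - 1) / (s j : ℚ)
      = ((s n : ℚ) - 2) - ((s n : ℚ) - 1) / (s i : ℚ) := by
    rw [← hsum2, ← Finset.add_sum_erase _ _ (Finset.mem_range.mpr hi)]
    ring
  rw [herase]
  have hi0 := hne i
  field_simp
  ring
end

section
/- Let s be Sylvester's sequence and P the simplex in ℝ^n with vertices u_0, …, u_n where u_i (for i < n) has s_i - 1 in coordinate i and -1 elsewhere, and u_n = (-1, …, -1). Then P is cut out by the inequalities x_i ≥ -1 for 0 ≤ i ≤ n-1 together with ∑_{i=0}^{n-1} ((s_n - 1)/s_i)·x_i ≤ 1. (This says the simplex P_2 is isomorphic to its polar dual.) -/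
/-!
The simplex with vertices `a i • e i - 𝟙` (`i < n`) and `-𝟙` is the image of the standard
simplex of `ℝ^{n+1}` under a linear map, and reading off barycentric coordinates shows that it is
`{x | x ≥ -1, ∑ (x i + 1) / a i ≤ 1}` whenever all `a i > 0`. For Sylvester's sequence the
telescoping identity `1 / s k = 1 / (s k - 1) - 1 / (s (k + 1) - 1)` gives
`∑_{i<n} 1 / s i = 1 - 1 / (s n - 1)`, which turns the last inequality into
`∑ (s n - 1) / s i * x i ≤ 1`.
-/

open Finset

namespace Sylvester

variable {s : ℕ → ℕ}

theorem two_le (h0 : s 0 = 2) (hrec : ∀ k, s (k + 1) = s k ^ 2 - s k + 1) (k : ℕ) :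
    2 ≤ s k := by
  induction k with
  | zero => omega
  | succ k ih =>
    have hk := hrec k
    have : 2 * s k ≤ s k ^ 2 := by rw [sq]; exact Nat.mul_le_mul_right _ ih
    omega

theorem cast_succ (hrec : ∀ k, s (k + 1) = s k ^ 2 - s k + 1) (k : ℕ) :
    (s (k + 1) : ℝ) = (s k : ℝ) ^ 2 - s k + 1 := by
  have : s k ≤ s k ^ 2 := Nat.le_self_pow two_ne_zero _
  rw [hrec k]
  push_cast [this]
  ring

theorem sum_range_inv (h0 : s 0 = 2) (hrec : ∀ k, s (k + 1) = s k ^ 2 - s k + 1) (n : ℕ) :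
    ∑ i ∈ range n, (s i : ℝ)⁻¹ = 1 - ((s n : ℝ) - 1)⁻¹ := by
  induction n with
  | zero => norm_num [h0]
  | succ n ih =>
    have h2 : (2 : ℝ) ≤ s n := by exact_mod_cast two_le h0 hrec n
    have hsub : (s n : ℝ) - 1 ≠ 0 := by linarith
    have hs : (s n : ℝ) ≠ 0 := by linarith
    rw [sum_range_succ, ih, cast_succ hrec,
      show (s n : ℝ) ^ 2 - s n + 1 - 1 = s n * (s n - 1) by ring]
    field_simp
    ring

end Sylvester

variable {n : ℕ}

/-- `w ↦ ∑ k, w k • u k`, where `u k` are the vertices in `convexHull_cornerSimplex`. -/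
def cornerSimplexMap (a : ℕ → ℝ) : (Fin (n + 1) → ℝ) →ₗ[ℝ] (Fin n → ℝ) where
  toFun w j := a j * w j.castSucc - ∑ k, w k
  map_add' v w := by ext j; simp only [Pi.add_apply, sum_add_distrib]; ring
  map_smul' c w := by
    ext j
    simp only [Pi.smul_apply, smul_eq_mul, RingHom.id_apply, ← mul_sum]
    ring

theorem cornerSimplexMap_single (a : ℕ → ℝ) (k : Fin (n + 1)) :
    cornerSimplexMap a (fun i => if k = i then 1 else 0) = fun j : Fin n =>
      if (k : ℕ) < n then (if (j : ℕ) = k then a k - 1 else -1) else -1 := by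
  ext j
  rcases Fin.eq_castSucc_or_eq_last k with ⟨i, rfl⟩ | rfl
  · by_cases hji : j = i
    · simp [cornerSimplexMap, hji]
    · simp [cornerSimplexMap, Ne.symm hji, Fin.val_ne_of_ne hji]
  · simp [cornerSimplexMap, (Fin.castSucc_lt_last j).ne']

theorem cornerSimplexMap_image_stdSimplex {a : ℕ → ℝ} (ha : ∀ i < n, 0 < a i) :
    cornerSimplexMap a '' stdSimplex ℝ (Fin (n + 1)) =
      {x | (∀ i, -1 ≤ x i) ∧ ∑ i : Fin n, (x i + 1) / a i ≤ 1} := by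
  have ha' (i : Fin n) : 0 < a i := ha i i.isLt
  ext x
  constructor
  · rintro ⟨w, ⟨hw0, hw1⟩, rfl⟩
    have hcoord (i : Fin n) : cornerSimplexMap a w i + 1 = a i * w i.castSucc := by
      simp [cornerSimplexMap, hw1]
    refine ⟨fun i => by nlinarith [hcoord i, hw0 i.castSucc, ha' i], ?_⟩
    calc ∑ i : Fin n, (cornerSimplexMap a w i + 1) / a i
        = ∑ i : Fin n, w i.castSucc := by
          refine sum_congr rfl fun i _ => ?_
          rw [hcoord, mul_div_cancel_left₀ _ (ha' i).ne']
      _ ≤ ∑ k, w k := by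
          rw [Fin.sum_univ_castSucc]
          linarith [hw0 (Fin.last n)]
      _ = 1 := hw1
  · rintro ⟨hx, hsum⟩
    set w : Fin (n + 1) → ℝ := Fin.snoc (fun i => (x i + 1) / a i) (1 - ∑ i, (x i + 1) / a i)
    have hw1 : ∑ k, w k = 1 := by simp [w, Fin.sum_univ_castSucc]
    refine ⟨w, ⟨fun k => ?_, hw1⟩, ?_⟩
    · rcases Fin.eq_castSucc_or_eq_last k with ⟨i, rfl⟩ | rfl
      · simpa [w] using div_nonneg (neg_le_iff_add_nonneg.mp (hx i)) (ha' i).le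
      · simpa [w] using hsum
    · ext i
      simp [cornerSimplexMap, hw1, w, mul_div_cancel₀ _ (ha' i).ne']

theorem convexHull_cornerSimplex {a : ℕ → ℝ} (ha : ∀ i < n, 0 < a i) :
    convexHull ℝ (Set.range (fun k : Fin (n + 1) => fun j : Fin n =>
        if (k : ℕ) < n then (if (j : ℕ) = (k : ℕ) then a k - 1 else -1) else -1)) =
      {x | (∀ i, -1 ≤ x i) ∧ ∑ i : Fin n, (x i + 1) / a i ≤ 1} := by
  rw [← cornerSimplexMap_image_stdSimplex ha, ← convexHull_basis_eq_stdSimplex,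
    LinearMap.image_convexHull, ← Set.range_comp]
  simp only [Function.comp_def, cornerSimplexMap_single]

theorem P2_dual_description (s : ℕ → ℕ) (h0 : s 0 = 2)
    (hrec : ∀ k, s (k + 1) = s k ^ 2 - s k + 1) (n : ℕ) :
    convexHull ℝ (Set.range (fun k : Fin (n + 1) => fun j : Fin n =>
        if (k : ℕ) < n then (if (j : ℕ) = (k : ℕ) then (s (k : ℕ) : ℝ) - 1 else -1)
        else -1)) =
    {x : Fin n → ℝ | (∀ i, -1 ≤ x i) ∧
      ∑ i : Fin n, (((s n : ℝ) - 1) / (s (i : ℕ) : ℝ)) * x i ≤ 1} := by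
  have hs (k : ℕ) : (2 : ℝ) ≤ s k := by exact_mod_cast Sylvester.two_le h0 hrec k
  rw [convexHull_cornerSimplex (a := fun i => (s i : ℝ)) fun i _ => by linarith [hs i]]
  ext x
  refine and_congr_right fun _ => ?_
  have hD : (0 : ℝ) < s n - 1 := by linarith [hs n]
  have hsplit : ∑ i : Fin n, (x i + 1) / s i =
      ∑ i : Fin n, x i / s i + (1 - ((s n : ℝ) - 1)⁻¹) := by
    rw [← Sylvester.sum_range_inv h0 hrec, ← Fin.sum_univ_eq_sum_range, ← sum_add_distrib]
    simp only [add_div, one_div]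
  have hscale : ∑ i : Fin n, ((s n : ℝ) - 1) / s i * x i =
      (s n - 1) * ∑ i : Fin n, x i / s i := by
    rw [mul_sum]
    exact sum_congr rfl fun i _ => by ring
  rw [hsplit, hscale, ← le_inv_mul_iff₀ hD]
  constructor <;> intro h <;> linarith
end

section
/- Let s be Sylvester's sequence and let Q ⊆ ℝ^{n+1} be the polytope {x | x_i ≥ -1 for all 0 ≤ i ≤ n, and ∑_{i=0}^{n} ((s_{n+1}-1)/s_i)·x_i ≤ 1}. Then every point x ∈ Q satisfies x_n ≤ s_n - 1, with equality only at x = (-1, …, -1, s_n - 1). -/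
theorem highest_point_of_dual_P2 (s : ℕ → ℕ) (h0 : s 0 = 2)
    (hrec : ∀ k, s (k + 1) = s k ^ 2 - s k + 1) (n : ℕ)
    (x : Fin (n + 1) → ℝ) (hx1 : ∀ i, -1 ≤ x i)
    (hx2 : ∑ i : Fin (n + 1), (((s (n + 1) : ℝ) - 1) / (s (i : ℕ) : ℝ)) * x i ≤ 1) :
    x (Fin.last n) ≤ (s n : ℝ) - 1 ∧
      (x (Fin.last n) = (s n : ℝ) - 1 →
        x = fun i => if i = Fin.last n then (s n : ℝ) - 1 else -1) := by
  have hs2 : ∀ k, 2 ≤ s k := by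
    intro k
    induction k with
    | zero => omega
    | succ k ih =>
      have h : 2 * s k ≤ s k * s k := Nat.mul_le_mul_right (s k) ih
      rw [hrec, pow_two]
      omega
  have hposR : ∀ k, (0 : ℝ) < (s k : ℝ) := fun k => by
    have := hs2 k; exact_mod_cast Nat.lt_of_lt_of_le (by norm_num) this
  have h2R : ∀ k, (2 : ℝ) ≤ (s k : ℝ) := fun k => by exact_mod_cast hs2 k
  have hcast : ∀ k, ((s (k + 1) : ℝ)) - 1 = (s k : ℝ) * ((s k : ℝ) - 1) := by
    intro k
    have hle : s k ≤ s k ^ 2 := by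
      have := hs2 k; nlinarith
    rw [hrec k]
    push_cast [Nat.cast_sub hle]
    ring
  have hT : ∀ m, ∑ i ∈ Finset.range (m + 1), (1 : ℝ) / (s i : ℝ)
      = 1 - 1 / ((s (m + 1) : ℝ) - 1) := by
    intro m
    induction m with
    | zero =>
      rw [Finset.sum_range_one, hcast 0, h0]
      norm_num
    | succ m ih =>
      rw [Finset.sum_range_succ, ih, hcast (m + 1)]
      have h1 : (s (m + 1) : ℝ) ≠ 0 := ne_of_gt (hposR _)
      have h2 : (s (m + 1) : ℝ) - 1 ≠ 0 := by have := h2R (m + 1); linarith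
      field_simp
      ring
  set c : Fin (n + 1) → ℝ := fun i => ((s (n + 1) : ℝ) - 1) / (s (i : ℕ) : ℝ) with hc
  have hcpos : ∀ i, 0 < c i := by
    intro i
    apply div_pos _ (hposR _)
    have := h2R (n + 1); linarith
  have hcsum : ∑ i : Fin (n + 1), c i = (s (n + 1) : ℝ) - 2 := by
    have h1 : ∑ i : Fin (n + 1), c i
        = ((s (n + 1) : ℝ) - 1) * ∑ i ∈ Finset.range (n + 1), (1 : ℝ) / (s i : ℝ) := by
      rw [Finset.mul_sum, ← Fin.sum_univ_eq_sum_range (fun i => ((s (n+1):ℝ)-1) * ((1:ℝ)/(s i : ℝ)))]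
      exact Finset.sum_congr rfl fun i _ => (mul_one_div _ _).symm
    have h2 : (s (n + 1) : ℝ) - 1 ≠ 0 := by have := h2R (n + 1); linarith
    rw [h1, hT n]
    field_simp
    ring
  have hterm : ∀ i, 0 ≤ c i * (x i + 1) := by
    intro i
    have := hx1 i
    have := hcpos i
    nlinarith
  have hkey : ∑ i : Fin (n + 1), c i * (x i + 1) ≤ (s (n + 1) : ℝ) - 1 := by
    have he : ∑ i : Fin (n + 1), c i * (x i + 1)
        = (∑ i : Fin (n + 1), c i * x i) + ∑ i : Fin (n + 1), c i := by
      rw [← Finset.sum_add_distrib]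
      exact Finset.sum_congr rfl fun i _ => by ring
    rw [he, hcsum]
    have : ∑ i : Fin (n + 1), c i * x i ≤ 1 := hx2
    linarith
  have hclast : c (Fin.last n) = (s n : ℝ) - 1 := by
    have hne : (s n : ℝ) ≠ 0 := ne_of_gt (hposR n)
    show ((s (n + 1) : ℝ) - 1) / (s ((Fin.last n : ℕ)) : ℝ) = _
    rw [Fin.val_last, hcast n, mul_comm, mul_div_assoc, div_self hne, mul_one]
  have hlast_le : c (Fin.last n) * (x (Fin.last n) + 1)
      ≤ ∑ i : Fin (n + 1), c i * (x i + 1) :=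
    Finset.single_le_sum (fun i _ => hterm i) (Finset.mem_univ _)
  have hsn1 : (0 : ℝ) < (s n : ℝ) - 1 := by have := h2R n; linarith
  have hmain : x (Fin.last n) ≤ (s n : ℝ) - 1 := by
    rw [hclast] at hlast_le
    have h3 := hkey
    rw [hcast n] at h3
    nlinarith
  refine ⟨hmain, fun heq => ?_⟩
  have hlastval : c (Fin.last n) * (x (Fin.last n) + 1) = (s (n + 1) : ℝ) - 1 := by
    rw [hclast, heq, hcast n]; ring
  have hsum_erase : ∑ i ∈ Finset.univ.erase (Fin.last n), c i * (x i + 1) ≤ 0 := by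
    have hadd := Finset.add_sum_erase Finset.univ (fun i => c i * (x i + 1))
      (Finset.mem_univ (Fin.last n))
    linarith [hkey, hadd.symm ▸ hkey]
  have hsum_erase_zero : ∑ i ∈ Finset.univ.erase (Fin.last n), c i * (x i + 1) = 0 :=
    le_antisymm hsum_erase (Finset.sum_nonneg fun j _ => hterm j)
  have hzero : ∀ i ∈ Finset.univ.erase (Fin.last n), c i * (x i + 1) = 0 :=
    (Finset.sum_eq_zero_iff_of_nonneg (fun j _ => hterm j)).mp hsum_erase_zero
  funext i
  by_cases hi : i = Fin.last n
  · simp [hi, heq]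
  · simp only [hi, if_false]
    have h := hzero i (Finset.mem_erase.mpr ⟨hi, Finset.mem_univ i⟩)
    have := hcpos i
    have : x i + 1 = 0 := by
      rcases mul_eq_zero.mp h with h' | h'
      · exact absurd h' (ne_of_gt (hcpos i))
      · exact h'
    linarith
end

section
/- Let s be Sylvester's sequence, n ≥ 1, and let y ∈ ℤ^n satisfy y_i ≥ -1 for all i and ∑_{i=0}^{n-1} ((s_n-1)/s_i)·y_i ≤ 1, with y ≠ (-1,…,-1). Define x ∈ ℤ^{n+1} by x_i = y_i for i < n and x_n = -∑_{i=0}^{n-1} ((s_n-1)/s_i)·y_i. Then x satisfies x_i ≥ -1 for all i ≤ n and ∑_{i=0}^{n} ((s_{n+1}-1)/s_i)·x_i ≤ 1, while x + e_n violates the latter inequality; that is, x is the highest lattice point of P̌_2^{(n+1)} above y. -/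
private lemma syl_two_le (s : ℕ → ℕ) (h0 : s 0 = 2)
    (hrec : ∀ k, s (k + 1) = s k ^ 2 - s k + 1) : ∀ k, 2 ≤ s k := by
  intro k
  induction k with
  | zero => omega
  | succ k ih =>
    have h : 2 * s k ≤ s k * s k := Nat.mul_le_mul_right _ ih
    have h2 := hrec k
    rw [pow_two] at h2
    omega

private lemma syl_rec_q (s : ℕ → ℕ) (h0 : s 0 = 2)
    (hrec : ∀ k, s (k + 1) = s k ^ 2 - s k + 1) (k : ℕ) :
    ((s (k + 1) : ℚ)) - 1 = (s k : ℚ) * ((s k : ℚ) - 1) := by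
  have h2 := syl_two_le s h0 hrec k
  have h3 : 2 * s k ≤ s k * s k := Nat.mul_le_mul_right _ h2
  have h4 : s (k + 1) + s k = s k * s k + 1 := by
    have := hrec k; rw [pow_two] at this; omega
  have h5 : ((s (k + 1) : ℚ)) + s k = (s k : ℚ) * s k + 1 := by exact_mod_cast h4
  nlinarith [h5]

private lemma syl_dvd (s : ℕ → ℕ) (h0 : s 0 = 2)
    (hrec : ∀ k, s (k + 1) = s k ^ 2 - s k + 1) :
    ∀ n i, i < n → (s i : ℤ) ∣ (s n : ℤ) - 1 := by
  intro n
  induction n with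
  | zero => intro i hi; exact absurd hi (Nat.not_lt_zero i)
  | succ n ih =>
    intro i hi
    have key : (s (n + 1) : ℤ) - 1 = (s n : ℤ) * ((s n : ℤ) - 1) := by
      exact_mod_cast syl_rec_q s h0 hrec n
    rcases Nat.lt_succ_iff_lt_or_eq.mp hi with h | h
    · rw [key]; exact Dvd.dvd.mul_left (ih i h) _
    · subst h; rw [key]; exact Dvd.intro _ rfl

private lemma syl_sum (s : ℕ → ℕ) (h0 : s 0 = 2)
    (hrec : ∀ k, s (k + 1) = s k ^ 2 - s k + 1) :
    ∀ n, ∑ i : Fin n, (1 : ℚ) / (s i) = 1 - 1 / ((s n : ℚ) - 1) := by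
  intro n
  induction n with
  | zero => norm_num [h0]
  | succ n ih =>
    rw [Fin.sum_univ_castSucc]
    simp only [Fin.coe_castSucc, Fin.val_last]
    rw [ih, syl_rec_q s h0 hrec n]
    have h2 : (2 : ℚ) ≤ s n := by exact_mod_cast syl_two_le s h0 hrec n
    have h1 : (s n : ℚ) ≠ 0 := by positivity
    have h1' : (s n : ℚ) - 1 ≠ 0 := by intro h; nlinarith
    field_simp
    ring

private lemma syl_three_le (s : ℕ → ℕ) (h0 : s 0 = 2)
    (hrec : ∀ k, s (k + 1) = s k ^ 2 - s k + 1) : ∀ k, 1 ≤ k → 3 ≤ s k := by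
  intro k
  induction k with
  | zero => omega
  | succ k ih =>
    intro _
    rcases Nat.eq_zero_or_pos k with h | h
    · subst h; rw [hrec, h0]; norm_num
    · have h3 := ih h
      have : 3 * s k ≤ s k * s k := Nat.mul_le_mul_right _ h3
      have h2 := hrec k
      rw [pow_two] at h2
      omega

theorem highest_lattice_point_in_column (s : ℕ → ℕ) (h0 : s 0 = 2)
    (hrec : ∀ k, s (k + 1) = s k ^ 2 - s k + 1) (n : ℕ) (hn : 1 ≤ n)
    (y : Fin n → ℤ) (hy1 : ∀ i, (-1 : ℤ) ≤ y i)
    (hy2 : ∑ i : Fin n, (((s n : ℚ) - 1) / (s (i : ℕ) : ℚ)) * (y i : ℚ) ≤ 1)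
    (hy3 : y ≠ fun _ => -1) :
    ∀ x : Fin (n + 1) → ℚ,
      (x = fun i : Fin (n + 1) => if h : (i : ℕ) < n then ((y ⟨i, h⟩ : ℤ) : ℚ)
        else -(∑ j : Fin n, (((s n : ℚ) - 1) / (s (j : ℕ) : ℚ)) * (y j : ℚ))) →
      (∀ i, -1 ≤ x i) ∧
      (∃ m : ℤ, x (Fin.last n) = (m : ℚ)) ∧
      (∑ i : Fin (n + 1), (((s (n + 1) : ℚ) - 1) / (s (i : ℕ) : ℚ)) * x i ≤ 1) ∧
      ¬ (∑ i : Fin (n + 1), (((s (n + 1) : ℚ) - 1) / (s (i : ℕ) : ℚ)) *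
          (x i + if i = Fin.last n then 1 else 0) ≤ 1) := by
  intro x hx
  set c : Fin n → ℚ := fun i => ((s n : ℚ) - 1) / (s (i : ℕ) : ℚ) with hc
  set S : ℚ := ∑ i : Fin n, c i * (y i : ℚ) with hS
  -- basic positivity facts
  have h2 : ∀ k, (2 : ℚ) ≤ s k := fun k => by exact_mod_cast syl_two_le s h0 hrec k
  have hspos : ∀ k, (0 : ℚ) < s k := fun k => lt_of_lt_of_le (by norm_num) (h2 k)
  have hsne : ∀ k, (s k : ℚ) ≠ 0 := fun k => ne_of_gt (hspos k)
  have h3 : (3 : ℚ) ≤ s n := by exact_mod_cast syl_three_le s h0 hrec n hn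
  have hcpos : ∀ i : Fin n, 0 < c i := by
    intro i
    apply div_pos (by linarith) (hspos i)
  -- x values
  have hxc : ∀ i : Fin n, x (Fin.castSucc i) = (y i : ℚ) := by
    intro i
    rw [hx]
    simp only []
    rw [dif_pos (show ((Fin.castSucc i : Fin (n+1)) : ℕ) < n from i.isLt)]
    norm_cast
  have hxl : x (Fin.last n) = -S := by
    rw [hx]
    simp only [Fin.val_last]
    rw [dif_neg (lt_irrefl n)]
  -- sum of coefficients
  have hsumc : ∑ i : Fin n, c i = (s n : ℚ) - 2 := by
    have e1 : ∑ i : Fin n, c i = ((s n : ℚ) - 1) * ∑ i : Fin n, (1 : ℚ) / (s i) := by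
      rw [Finset.mul_sum]
      exact Finset.sum_congr rfl fun i _ => by rw [mul_one_div]
    rw [e1, syl_sum s h0 hrec n]
    have h1' : (s n : ℚ) - 1 ≠ 0 := by intro h; nlinarith
    field_simp
    ring
  -- strict lower bound on S
  have hSlb : 2 - (s n : ℚ) < S := by
    obtain ⟨j, hj⟩ := Function.ne_iff.mp hy3
    have hyj : (0 : ℤ) ≤ y j := by have := hy1 j; omega
    have hlt : ∑ i : Fin n, c i * (-1 : ℚ) < S := by
      apply Finset.sum_lt_sum
      · intro i _
        have : (-1 : ℚ) ≤ (y i : ℚ) := by exact_mod_cast hy1 i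
        exact mul_le_mul_of_nonneg_left this (le_of_lt (hcpos i))
      · refine ⟨j, Finset.mem_univ j, ?_⟩
        have : (-1 : ℚ) < (y j : ℚ) := by exact_mod_cast (by omega : (-1 : ℤ) < y j)
        exact mul_lt_mul_of_pos_left this (hcpos j)
    have e2 : ∑ i : Fin n, c i * (-1 : ℚ) = -((s n : ℚ) - 2) := by
      simp only [mul_neg_one]
      rw [Finset.sum_neg_distrib, hsumc]
    rw [e2] at hlt
    linarith
  have hSub : S ≤ 1 := hy2
  -- the two sums
  have hrecn := syl_rec_q s h0 hrec n
  have hterm : ∀ (z : Fin (n+1) → ℚ),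
      ∑ i : Fin (n + 1), (((s (n + 1) : ℚ) - 1) / (s (i : ℕ) : ℚ)) * z i
      = (s n : ℚ) * (∑ i : Fin n, c i * z (Fin.castSucc i))
        + ((s n : ℚ) - 1) * z (Fin.last n) := by
    intro z
    rw [Fin.sum_univ_castSucc]
    simp only [Fin.coe_castSucc, Fin.val_last]
    rw [hrecn, Finset.mul_sum]
    congr 1
    · refine Finset.sum_congr rfl fun i _ => ?_
      rw [hc]
      simp only []
      rw [mul_div_assoc, mul_assoc]
    · rw [mul_div_cancel_left₀ _ (hsne n)]
  have hsum1 : ∑ i : Fin (n + 1), (((s (n + 1) : ℚ) - 1) / (s (i : ℕ) : ℚ)) * x i = S := by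
    rw [hterm x, hxl]
    have : ∑ i : Fin n, c i * x (Fin.castSucc i) = S := by
      rw [hS]
      exact Finset.sum_congr rfl fun i _ => by rw [hxc i]
    rw [this]
    ring
  -- integrality
  have hdint : ∀ i : Fin n, ∃ d : ℤ, (d : ℚ) = c i := by
    intro i
    obtain ⟨d, hd⟩ := syl_dvd s h0 hrec n i i.isLt
    refine ⟨d, ?_⟩
    have hq : ((s n : ℚ) - 1) = (s (i : ℕ) : ℚ) * (d : ℚ) := by exact_mod_cast hd
    rw [hc]
    simp only []
    rw [hq, mul_div_cancel_left₀ _ (hsne (i : ℕ))]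
  choose d hd using hdint
  refine ⟨?_, ⟨-∑ i : Fin n, d i * y i, ?_⟩, ?_, ?_⟩
  · -- all coords ≥ -1
    intro i
    rw [hx]
    by_cases h : (i : ℕ) < n
    · simp only [dif_pos h]; exact_mod_cast hy1 ⟨i, h⟩
    · simp only [dif_neg h]; linarith
  · -- integer last coordinate
    rw [hxl]
    push_cast
    rw [hS, neg_inj]
    exact Finset.sum_congr rfl fun i _ => by rw [hd i]
  · rw [hsum1]; exact hSub
  · -- violation
    have hsum2 : ∑ i : Fin (n + 1), (((s (n + 1) : ℚ) - 1) / (s (i : ℕ) : ℚ)) *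
        (x i + if i = Fin.last n then 1 else 0) = S + ((s n : ℚ) - 1) := by
      rw [hterm]
      have e1 : ∀ i : Fin n, (if Fin.castSucc i = Fin.last n then (1:ℚ) else 0) = 0 := by
        intro i
        rw [if_neg (Fin.castSucc_lt_last i).ne]
      have e2 : ∑ i : Fin n, c i * (x (Fin.castSucc i) + if Fin.castSucc i = Fin.last n then (1:ℚ) else 0) = S := by
        rw [hS]
        refine Finset.sum_congr rfl fun i _ => ?_
        rw [e1 i, add_zero, hxc i]
      rw [e2, if_pos rfl, hxl]
      ring
    rw [hsum2]
    push_neg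
    linarith
end

section
/- Let s be Sylvester's sequence and x ∈ ℝ^{n+1} with x_i ≥ -1 for all i and some x_j > -1 for j < n. If x_n = -∑_{i=0}^{n-1} ((s_n-1)/s_i)·x_i, then x_n < s_n - 2. -/
/-!
The weights `(s n - 1) / s i` are positive and sum to `s n - 2`, because the recurrence
`s (k + 1) - 1 = s k (s k - 1)` makes `1 / s k = 1 / (s k - 1) - 1 / (s (k + 1) - 1)` telescope.
Since every `x i ≥ -1`, with strict inequality for some `i < n`, the value
`x n = -∑ ((s n - 1) / s i) x i` is strictly below the sum of the weights.
-/

open Finset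

theorem two_le_of_sq_sub_add_one {s : ℕ → ℕ} (h0 : 2 ≤ s 0)
    (hrec : ∀ k, s (k + 1) = s k ^ 2 - s k + 1) (k : ℕ) : 2 ≤ s k := by
  induction k with
  | zero => exact h0
  | succ k ih =>
    have : s k + s k ≤ s k ^ 2 := by nlinarith
    rw [hrec k]
    omega

theorem cast_sq_sub_add_one {s : ℕ → ℕ} (hrec : ∀ k, s (k + 1) = s k ^ 2 - s k + 1) (k : ℕ) :
    (s (k + 1) : ℝ) = (s k : ℝ) ^ 2 - s k + 1 := by
  rw [hrec k, Nat.cast_add, Nat.cast_sub (Nat.le_self_pow two_ne_zero _)]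
  push_cast
  ring

theorem sum_range_one_div_of_sq_sub_add_one {t : ℕ → ℝ}
    (hrec : ∀ k, t (k + 1) = t k ^ 2 - t k + 1) (ht : ∀ k, 1 < t k) (m : ℕ) :
    ∑ i ∈ range m, 1 / t i = 1 / (t 0 - 1) - 1 / (t m - 1) := by
  have hstep : ∀ k, 1 / t k = 1 / (t k - 1) - 1 / (t (k + 1) - 1) := by
    intro k
    have h1 : t k - 1 ≠ 0 := by linarith [ht k]
    have h0 : t k ≠ 0 := by linarith [ht k]
    rw [hrec k, show t k ^ 2 - t k + 1 - 1 = t k * (t k - 1) by ring]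
    field_simp
  simp_rw [hstep]
  exact sum_range_sub' (fun k => 1 / (t k - 1)) m

theorem neg_sum_mul_lt_sum {ι : Type*} {s : Finset ι} {c y : ι → ℝ}
    (hc : ∀ i ∈ s, 0 < c i) (hy : ∀ i ∈ s, -1 ≤ y i) (hj : ∃ j ∈ s, -1 < y j) :
    -∑ i ∈ s, c i * y i < ∑ i ∈ s, c i := by
  rw [← sum_neg_distrib]
  obtain ⟨j, hjs, hyj⟩ := hj
  refine sum_lt_sum (fun i hi => ?_) ⟨j, hjs, ?_⟩
  · nlinarith [hc i hi, hy i hi]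
  · nlinarith [hc j hjs]

theorem highest_point_bound (s : ℕ → ℕ) (h0 : s 0 = 2)
    (hrec : ∀ k, s (k + 1) = s k ^ 2 - s k + 1) (n : ℕ)
    (x : Fin (n + 1) → ℝ) (hx1 : ∀ i, -1 ≤ x i)
    (hx2 : ∃ j : Fin (n + 1), (j : ℕ) < n ∧ -1 < x j)
    (hx3 : x (Fin.last n) =
      -(∑ i : Fin n, (((s n : ℝ) - 1) / (s (i : ℕ) : ℝ)) * x i.castSucc)) :
    x (Fin.last n) < (s n : ℝ) - 2 := by
  have hs : ∀ k, (1 : ℝ) < s k := fun k => by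
    exact_mod_cast (two_le_of_sq_sub_add_one h0.ge hrec k : 2 ≤ s k)
  have hweights : ∑ i : Fin n, ((s n : ℝ) - 1) / s (i : ℕ) = s n - 2 := by
    have hsn : (s n : ℝ) - 1 ≠ 0 := (sub_pos.2 (hs n)).ne'
    simp_rw [div_eq_mul_one_div ((s n : ℝ) - 1), ← mul_sum]
    rw [Fin.sum_univ_eq_sum_range (fun i => 1 / (s i : ℝ)),
      sum_range_one_div_of_sq_sub_add_one (cast_sq_sub_add_one hrec) hs, h0]
    field_simp
    ring
  obtain ⟨j, hjn, hxj⟩ := hx2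
  rw [hx3, ← hweights]
  refine neg_sum_mul_lt_sum (fun i _ => div_pos (sub_pos.2 (hs n)) (by linarith [hs i]))
    (fun i _ => hx1 _) ⟨j.castLT hjn, mem_univ _, ?_⟩
  rwa [Fin.castSucc_castLT]
end

section
/- Let H be a hyperplane in ℝ^n, P ⊆ H a polytope, φ : P → ℝ a convex function, z ∈ ℝ^n \ H, and ω ∈ ℝ. Define Φ : Conv(z, P) → ℝ by Φ(t·x + (1-t)·z) = t·φ(x) + (1-t)·ω for x ∈ P and t ∈ [0,1]. Then Φ is well-defined and convex on Conv(z, P). -/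
/-!
The hyperplane `f = c` reads off the coefficient of `p = t • x + (1 - t) • z` as
`t = (f p - f z) / (c - f z)`, and then `x`; this gives a closed formula for `Φ`. Convexity of `Φ`
is convexity of the perspective `(s, y) ↦ s φ (y / s)` of `φ`: a convex combination
`λ p + μ p'` of `p = t • x + (1 - t) • z` and `p' = t' • x' + (1 - t') • z` has the same form, its
`P`-component being the combination of `x` and `x'` with weights proportional to `λ t` and `μ t'`.
-/

open Set

section ConeExtension

variable {𝕜 E : Type*} [Field 𝕜] [AddCommGroup E] [Module 𝕜 E]
  (f : E →ₗ[𝕜] 𝕜) (c : 𝕜) (z : E)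

def coneCoeff (p : E) : 𝕜 := (f p - f z) / (c - f z)

/-- At `z` the coefficient vanishes, so the junk value `0⁻¹ = 0` is harmless. -/
def coneExtension (φ : E → 𝕜) (ω : 𝕜) (p : E) : 𝕜 :=
  coneCoeff f c z p * φ ((coneCoeff f c z p)⁻¹ • (p - (1 - coneCoeff f c z p) • z)) +
    (1 - coneCoeff f c z p) * ω

variable {f c z}

theorem coneCoeff_smul_add_smul {x : E} (hx : f x = c) (hz : f z ≠ c) (t : 𝕜) :
    coneCoeff f c z (t • x + (1 - t) • z) = t := by
  have : c - f z ≠ 0 := sub_ne_zero.mpr hz.symm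
  rw [coneCoeff, map_add, map_smul, map_smul, hx, smul_eq_mul, smul_eq_mul]
  field_simp
  ring

theorem coneExtension_smul_add_smul {x : E} (hx : f x = c) (hz : f z ≠ c) (φ : E → 𝕜)
    (ω t : 𝕜) : coneExtension f c z φ ω (t • x + (1 - t) • z) = t * φ x + (1 - t) * ω := by
  rw [coneExtension, coneCoeff_smul_add_smul hx hz, add_sub_cancel_right]
  rcases eq_or_ne t 0 with rfl | ht
  · simp
  · rw [inv_smul_smul₀ ht]

end ConeExtension

section Ordered

variable {𝕜 E : Type*} [Field 𝕜] [LinearOrder 𝕜] [IsStrictOrderedRing 𝕜]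
  [AddCommGroup E] [Module 𝕜 E]

theorem ConvexOn.exists_perspective_le {P : Set E} {φ : E → 𝕜} (hφ : ConvexOn 𝕜 P φ)
    {x y : E} (hx : x ∈ P) (hy : y ∈ P) {a b : 𝕜} (ha : 0 ≤ a) (hb : 0 ≤ b) :
    ∃ w ∈ P, (a + b) • w = a • x + b • y ∧ (a + b) * φ w ≤ a * φ x + b * φ y := by
  rcases (add_nonneg ha hb).eq_or_lt with hab | hab
  · obtain ⟨rfl, rfl⟩ := (add_eq_zero_iff_of_nonneg ha hb).mp hab.symm
    exact ⟨x, hx, by simp, by simp⟩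
  refine ⟨_, convex_iff_div.mp hφ.1 hx hy ha hb hab, ?_, ?_⟩
  · rw [smul_add, smul_smul, smul_smul, mul_div_cancel₀ _ hab.ne', mul_div_cancel₀ _ hab.ne']
  · calc (a + b) * φ ((a / (a + b)) • x + (b / (a + b)) • y)
        ≤ (a + b) * ((a / (a + b)) • φ x + (b / (a + b)) • φ y) :=
          mul_le_mul_of_nonneg_left ((convexOn_iff_div.mp hφ).2 hx hy ha hb hab) hab.le
      _ = a * φ x + b * φ y := by simp only [smul_eq_mul]; field_simp

theorem Convex.exists_smul_add_one_sub_smul_of_mem_convexHull_insert {P : Set E}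
    (hP : Convex 𝕜 P) (hne : P.Nonempty) {z p : E} (hp : p ∈ convexHull 𝕜 (insert z P)) :
    ∃ x ∈ P, ∃ t ∈ Icc (0 : 𝕜) 1, t • x + (1 - t) • z = p := by
  rw [convexHull_insert hne, hP.convexHull_eq, convexJoin_singleton_left] at hp
  simp only [mem_iUnion, segment_eq_image, mem_image] at hp
  obtain ⟨x, hx, t, ht, rfl⟩ := hp
  exact ⟨x, hx, t, ht, add_comm _ _⟩

theorem convexOn_coneExtension {f : E →ₗ[𝕜] 𝕜} {c : 𝕜} {z : E} {P : Set E}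
    (hP : ∀ x ∈ P, f x = c) {φ : E → 𝕜} (hφ : ConvexOn 𝕜 P φ) (hz : f z ≠ c) (ω : 𝕜) :
    ConvexOn 𝕜 (convexHull 𝕜 (insert z P)) (coneExtension f c z φ ω) := by
  refine ⟨convex_convexHull 𝕜 _, ?_⟩
  rcases P.eq_empty_or_nonempty with rfl | hne
  · simp only [insert_empty_eq, convexHull_singleton, mem_singleton_iff]
    rintro _ rfl _ rfl l m - - hlm
    rw [← add_smul, ← add_smul, hlm, one_smul, one_smul]
  rintro p hp q hq l m hl hm hlm
  obtain ⟨x, hx, a, ha, rfl⟩ := hφ.1.exists_smul_add_one_sub_smul_of_mem_convexHull_insert hne hp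
  obtain ⟨y, hy, b, hb, rfl⟩ := hφ.1.exists_smul_add_one_sub_smul_of_mem_convexHull_insert hne hq
  obtain ⟨w, hw, hws, hφw⟩ :=
    hφ.exists_perspective_le hx hy (mul_nonneg hl ha.1) (mul_nonneg hm hb.1)
  have hcomb : l • (a • x + (1 - a) • z) + m • (b • y + (1 - b) • z) =
      (l * a + m * b) • w + (1 - (l * a + m * b)) • z := by
    rw [hws]; linear_combination (norm := module) hlm • z
  rw [hcomb, coneExtension_smul_add_smul (hP w hw) hz, coneExtension_smul_add_smul (hP x hx) hz,
    coneExtension_smul_add_smul (hP y hy) hz, smul_eq_mul, smul_eq_mul]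
  linear_combination hφw - ω * hlm

end Ordered

theorem cone_convex_extension_general (n : ℕ) (f : (Fin n → ℝ) →ₗ[ℝ] ℝ) (c : ℝ)
    (P : Set (Fin n → ℝ)) (hPH : ∀ x ∈ P, f x = c)
    (φ : (Fin n → ℝ) → ℝ) (hφ : ConvexOn ℝ P φ)
    (z : Fin n → ℝ) (hz : f z ≠ c) (ω : ℝ) :
    (∀ x ∈ P, ∀ x' ∈ P, ∀ t ∈ Set.Icc (0 : ℝ) 1, ∀ t' ∈ Set.Icc (0 : ℝ) 1,
        t • x + (1 - t) • z = t' • x' + (1 - t') • z →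
        t * φ x + (1 - t) * ω = t' * φ x' + (1 - t') * ω) ∧
    ∃ Φ : (Fin n → ℝ) → ℝ,
      (∀ x ∈ P, ∀ t ∈ Set.Icc (0 : ℝ) 1,
        Φ (t • x + (1 - t) • z) = t * φ x + (1 - t) * ω) ∧
      ConvexOn ℝ (convexHull ℝ (insert z P)) Φ := by
  refine ⟨fun x hx x' hx' t _ t' _ h => ?_, coneExtension f c z φ ω,
    fun x hx t _ => coneExtension_smul_add_smul (hPH x hx) hz φ ω t,
    convexOn_coneExtension hPH hφ hz ω⟩
  rw [← coneExtension_smul_add_smul (hPH x hx) hz φ ω, h,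
    coneExtension_smul_add_smul (hPH x' hx') hz]

theorem cone_convex_extension (n : ℕ) (f : (Fin n → ℝ) →ₗ[ℝ] ℝ) (c : ℝ)
    (P : Set (Fin n → ℝ)) (hPH : ∀ x ∈ P, f x = c) (hPconv : Convex ℝ P)
    (φ : (Fin n → ℝ) → ℝ) (hφ : ConvexOn ℝ P φ)
    (z : Fin n → ℝ) (hz : f z ≠ c) (ω : ℝ) :
    (∀ x ∈ P, ∀ x' ∈ P, ∀ t ∈ Set.Icc (0 : ℝ) 1, ∀ t' ∈ Set.Icc (0 : ℝ) 1,
        t • x + (1 - t) • z = t' • x' + (1 - t') • z →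
        t * φ x + (1 - t) * ω = t' * φ x' + (1 - t') * ω) ∧
    ∃ Φ : (Fin n → ℝ) → ℝ,
      (∀ x ∈ P, ∀ t ∈ Set.Icc (0 : ℝ) 1,
        Φ (t • x + (1 - t) • z) = t * φ x + (1 - t) * ω) ∧
      ConvexOn ℝ (convexHull ℝ (insert z P)) Φ :=
  cone_convex_extension_general n f c P hPH φ hφ z hz ω
end

section
/- Let s be Sylvester's sequence. In ℝ^{n+1}, the simplex P_1^{(n+1)} = Conv(e_0, …, e_n, w_1) with w_1 = (2·w_2, -1) and w_2 ∈ ℤ^n the vector with coordinates -(s_n-1)/s_i, equals Conv((P_2 × {0}) ∪ {e_n, w_1}), where P_2 = Conv(e_0, …, e_{n-1}, w_2) ⊆ ℝ^n. -/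
/-! The point `(w₂, 0)` is the midpoint of `eₙ` and `w₁ = (2 w₂, -1)`. Hence adjoining it to the
vertices `e₀, …, eₙ, w₁` of `P₁` does not change their convex hull, and the image of `P₂` under
the linear embedding `x ↦ (x, 0)` is the hull of `(e₀, 0), …, (eₙ₋₁, 0), (w₂, 0)`. -/

open Set

section ConvexHull

variable {𝕜 E F : Type*} [Semiring 𝕜] [PartialOrder 𝕜] [AddCommMonoid E] [AddCommMonoid F]
  [Module 𝕜 E] [Module 𝕜 F]

theorem convexHull_insert_of_mem_convexHull {s : Set E} {x : E} (hx : x ∈ convexHull 𝕜 s) :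
    convexHull 𝕜 (insert x s) = convexHull 𝕜 s :=
  (convexHull_min (insert_subset hx (subset_convexHull 𝕜 s)) (convex_convexHull 𝕜 s)).antisymm
    (convexHull_mono (subset_insert x s))

theorem convexHull_image_convexHull_insert_union_pair (f : E →ₗ[𝕜] F) (w : E) (B : Set E)
    {e v : F} (hw : f w ∈ segment 𝕜 e v) :
    convexHull 𝕜 (f '' convexHull 𝕜 (insert w B) ∪ {e, v}) = convexHull 𝕜 (f '' B ∪ {e, v}) := by
  rw [f.image_convexHull, convexHull_convexHull_union_left, image_insert_eq, insert_union,
    convexHull_insert_of_mem_convexHull]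
  exact segment_subset_convexHull (mem_union_right _ (mem_insert e {v}))
    (mem_union_right _ (mem_insert_of_mem e (mem_singleton v))) hw

end ConvexHull

theorem range_fin_ite_lt {α : Type*} (a : ℕ → α) (b : α) (m : ℕ) :
    range (fun k : Fin (m + 1) => if (k : ℕ) < m then a k else b) = insert b (a '' Iio m) := by
  ext x
  constructor
  · rintro ⟨k, rfl⟩
    dsimp only
    split_ifs with hk
    · exact mem_insert_of_mem b ⟨k, hk, rfl⟩
    · exact mem_insert b _
  · rintro (rfl | ⟨j, hj, rfl⟩)
    · exact ⟨Fin.last m, by simp⟩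
    · exact ⟨⟨j, by simp at hj; omega⟩, by simp_all [show j < m from hj]⟩

namespace Fin

variable (R : Type*) [Semiring R] (n : ℕ)

def padLast : (Fin n → R) →ₗ[R] (Fin (n + 1) → R) where
  toFun x i := if h : (i : ℕ) < n then x ⟨i, h⟩ else 0
  map_add' x y := by ext i; simp only [Pi.add_apply]; split_ifs <;> simp
  map_smul' c x := by ext i; simp only [Pi.smul_apply]; split_ifs <;> simp

theorem coe_padLast :
    ⇑(padLast R n) =
      fun (x : Fin n → R) (i : Fin (n + 1)) => if h : (i : ℕ) < n then x ⟨i, h⟩ else 0 :=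
  rfl

variable {R n}

theorem padLast_indicator {j : ℕ} (hj : j < n) :
    padLast R n (fun i : Fin n => if (i : ℕ) = j then (1 : R) else 0) =
      fun i : Fin (n + 1) => if (i : ℕ) = j then (1 : R) else 0 := by
  ext i
  by_cases hi : (i : ℕ) < n
  · simp [coe_padLast, hi]
  · simp [coe_padLast, hi, show (i : ℕ) ≠ j by omega]

theorem padLast_mem_segment (w : Fin n → ℝ) :
    padLast ℝ n w ∈ segment ℝ (fun i => if i = last n then 1 else 0)
      (fun i => if h : (i : ℕ) < n then 2 * w ⟨i, h⟩ else -1) := by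
  refine ⟨1 / 2, 1 / 2, by norm_num, by norm_num, by norm_num, ?_⟩
  ext i
  by_cases hi : (i : ℕ) < n
  · simp [coe_padLast, hi, Fin.ext_iff, hi.ne]
  · obtain rfl : i = last n := Fin.ext (by simp; omega)
    simp [coe_padLast]

end Fin

theorem P1_eq_conv_P2_en_w1_general (s : ℕ → ℕ) (n : ℕ) :
    ∀ w2 : Fin n → ℝ,
      (w2 = fun i : Fin n => -(((s n : ℝ) - 1) / (s (i : ℕ) : ℝ))) →
    ∀ w1 en : Fin (n + 1) → ℝ,
      (w1 = fun i : Fin (n + 1) => if h : (i : ℕ) < n then 2 * w2 ⟨i, h⟩ else -1) →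
      (en = fun i : Fin (n + 1) => if i = Fin.last n then 1 else 0) →
      convexHull ℝ (Set.range (fun k : Fin (n + 2) =>
        if (k : ℕ) < n + 1 then
          (fun i : Fin (n + 1) => if (i : ℕ) = (k : ℕ) then (1 : ℝ) else 0)
        else w1)) =
      convexHull ℝ
        (((fun x : Fin n → ℝ => fun i : Fin (n + 1) =>
            if h : (i : ℕ) < n then x ⟨i, h⟩ else 0) ''
          convexHull ℝ (Set.range (fun k : Fin (n + 1) =>
            if (k : ℕ) < n then
              (fun i : Fin n => if (i : ℕ) = (k : ℕ) then (1 : ℝ) else 0)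
            else w2))) ∪ {en, w1}) := by
  rintro w2 - w1 en rfl rfl
  have hlast : (fun i : Fin (n + 1) => if (i : ℕ) = n then (1 : ℝ) else 0) =
      fun i => if i = Fin.last n then 1 else 0 := by
    ext i
    simp [Fin.ext_iff]
  rw [← Fin.coe_padLast,
    range_fin_ite_lt (fun (j : ℕ) (i : Fin (n + 1)) => if (i : ℕ) = j then (1 : ℝ) else 0),
    range_fin_ite_lt (fun (j : ℕ) (i : Fin n) => if (i : ℕ) = j then (1 : ℝ) else 0),
    convexHull_image_convexHull_insert_union_pair _ _ _ (Fin.padLast_mem_segment w2),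
    show Iio (n + 1) = insert n (Iio n) from Order.Iio_succ_eq_insert n, image_insert_eq, hlast,
    image_image, image_congr fun j hj => Fin.padLast_indicator (R := ℝ) (mem_Iio.mp hj),
    union_insert, union_singleton, insert_comm]

theorem P1_eq_conv_P2_en_w1 (s : ℕ → ℕ) (h0 : s 0 = 2)
    (hrec : ∀ k, s (k + 1) = s k ^ 2 - s k + 1) (n : ℕ) (hn : 1 ≤ n) :
    ∀ w2 : Fin n → ℝ,
      (w2 = fun i : Fin n => -(((s n : ℝ) - 1) / (s (i : ℕ) : ℝ))) →
    ∀ w1 en : Fin (n + 1) → ℝ,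
      (w1 = fun i : Fin (n + 1) => if h : (i : ℕ) < n then 2 * w2 ⟨i, h⟩ else -1) →
      (en = fun i : Fin (n + 1) => if i = Fin.last n then 1 else 0) →
      convexHull ℝ (Set.range (fun k : Fin (n + 2) =>
        if (k : ℕ) < n + 1 then
          (fun i : Fin (n + 1) => if (i : ℕ) = (k : ℕ) then (1 : ℝ) else 0)
        else w1)) =
      convexHull ℝ
        (((fun x : Fin n → ℝ => fun i : Fin (n + 1) =>
            if h : (i : ℕ) < n then x ⟨i, h⟩ else 0) ''
          convexHull ℝ (Set.range (fun k : Fin (n + 1) =>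
            if (k : ℕ) < n then
              (fun i : Fin n => if (i : ℕ) = (k : ℕ) then (1 : ℝ) else 0)
            else w2))) ∪ {en, w1}) :=
  P1_eq_conv_P2_en_w1_general s n
end

section
/- For Sylvester's sequence, the intersection of P_2^{(n+1)}'s dual simplex P̌_2^{(n+1)} = {x ∈ ℝ^{n+1} | x_i ≥ -1 ∀i, ∑_{i=0}^{n}((s_{n+1}-1)/s_i)x_i ≤ 1} with the hyperplane {x_n = -1} equals P̌_2^{(n)} × {-1}, where P̌_2^{(n)} = {y ∈ ℝ^n | y_i ≥ -1 ∀i, ∑_{i=0}^{n-1}((s_n-1)/s_i)y_i ≤ 1}. -/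
theorem dual_P2_hyperplane_section (s : ℕ → ℕ) (h0 : s 0 = 2)
    (hrec : ∀ k, s (k + 1) = s k ^ 2 - s k + 1) (n : ℕ) :
    {x : Fin (n + 1) → ℝ | (∀ i, -1 ≤ x i) ∧
        ∑ i : Fin (n + 1), (((s (n + 1) : ℝ) - 1) / (s (i : ℕ) : ℝ)) * x i ≤ 1} ∩
      {x : Fin (n + 1) → ℝ | x (Fin.last n) = -1} =
    (fun y : Fin n → ℝ => fun i : Fin (n + 1) =>
        if h : (i : ℕ) < n then y ⟨i, h⟩ else -1) ''
      {y : Fin n → ℝ | (∀ i, -1 ≤ y i) ∧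
        ∑ i : Fin n, (((s n : ℝ) - 1) / (s (i : ℕ) : ℝ)) * y i ≤ 1} := by
  have hpos : ∀ k, 2 ≤ s k := by
    intro k
    induction k with
    | zero => omega
    | succ k ih =>
      have h2 : 2 * s k ≤ s k * s k := Nat.mul_le_mul_right _ ih
      rw [hrec k, sq]; omega
  have hposR : ∀ k, (0:ℝ) < s k := fun k => by
    have : 0 < s k := by have := hpos k; omega
    exact_mod_cast this
  have h1 : s (n+1) + s n = s n * s n + 1 := by
    have h := hrec n
    have h2 : 2 * s n ≤ s n * s n := Nat.mul_le_mul_right _ (hpos n)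
    rw [sq] at h; omega
  have hA : ((s (n+1) : ℝ)) - 1 = (s n : ℝ) * ((s n : ℝ) - 1) := by
    have hc : ((s (n+1) + s n : ℕ) : ℝ) = ((s n * s n + 1 : ℕ) : ℝ) := by
      exact_mod_cast congrArg (Nat.cast : ℕ → ℝ) h1
    push_cast at hc
    nlinarith [hc]
  have hlast : ((s (n+1) : ℝ) - 1) / (s n : ℝ) = (s n : ℝ) - 1 := by
    rw [hA]; exact mul_div_cancel_left₀ _ (ne_of_gt (hposR n))
  have hterm : ∀ (i : ℕ) (t : ℝ),
      ((s (n+1) : ℝ) - 1) / (s i : ℝ) * t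
        = (s n : ℝ) * (((s n : ℝ) - 1) / (s i : ℝ) * t) := by
    intro i t; rw [hA]; ring
  have key : ∀ x : Fin (n+1) → ℝ, x (Fin.last n) = -1 →
      ((∑ i : Fin (n+1), ((s (n+1) : ℝ) - 1) / (s (i : ℕ) : ℝ) * x i ≤ 1) ↔
       (∑ i : Fin n, ((s n : ℝ) - 1) / (s (i : ℕ) : ℝ) * x i.castSucc ≤ 1)) := by
    intro x hl
    rw [Fin.sum_univ_castSucc]
    simp only [Fin.coe_castSucc, Fin.val_last]
    rw [hl, hlast]
    rw [Finset.sum_congr rfl (fun (i : Fin n) _ => hterm i.val (x i.castSucc)),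
      ← Finset.mul_sum]
    set T := ∑ i : Fin n, ((s n : ℝ) - 1) / (s (i : ℕ) : ℝ) * x i.castSucc with hT
    constructor <;> intro h <;> nlinarith [hposR n]
  ext x
  simp only [Set.mem_inter_iff, Set.mem_setOf_eq, Set.mem_image]
  constructor
  · rintro ⟨⟨hb, hsum⟩, hl⟩
    refine ⟨fun i => x i.castSucc, ⟨fun i => hb _, ?_⟩, ?_⟩
    · have := (key x hl).mp hsum
      convert this using 2
    · funext i
      by_cases h : (i : ℕ) < n
      · have he : (⟨(i : ℕ), h⟩ : Fin n).castSucc = i := Fin.ext rfl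
        simp [h, he]
      · have hi : i = Fin.last n :=
          Fin.ext (by have := i.isLt; simp only [Fin.val_last]; omega)
        simp only [h, dif_neg, not_false_iff]
        rw [hi]
        exact hl.symm
  · rintro ⟨y, ⟨hb, hsum⟩, rfl⟩
    have hl : (fun i : Fin (n+1) => if h : (i : ℕ) < n then y ⟨i, h⟩ else -1)
        (Fin.last n) = -1 := by simp
    refine ⟨⟨?_, ?_⟩, hl⟩
    · intro i
      by_cases h : (i : ℕ) < n
      · simp only [h, dif_pos]; exact hb _
      · simp [h]
    · refine (key _ hl).mpr ?_
      have heq : ∀ i : Fin n,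
          (fun j : Fin (n+1) => if h : (j : ℕ) < n then y ⟨j, h⟩ else -1) i.castSucc
            = y i := by
        intro i
        simp only [Fin.coe_castSucc, i.isLt, dif_pos]
      calc ∑ i : Fin n, ((s n : ℝ) - 1) / (s (i : ℕ) : ℝ) *
            (fun j : Fin (n+1) => if h : (j : ℕ) < n then y ⟨j, h⟩ else -1) i.castSucc
          = ∑ i : Fin n, ((s n : ℝ) - 1) / (s (i : ℕ) : ℝ) * y i := by
            exact Finset.sum_congr rfl (fun i _ => by rw [heq i])
        _ ≤ 1 := hsum
end
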